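/- Let q be a quadratic form on a 2g-dimensional symplectic ℤ/2-vector space (V, ω) with Arf(q) = 1. Then there exist linearly independent vectors e₁, …, e_g ∈ V with ω(e_i, e_j) = 0 and q(e_i) = 0 for all i, j. -/
import Mathlib
set_option maxHeartbeats 1000000

open Module

private lemma zmod2_cases : ∀ c : ZMod 2, c = 0 ∨ c = 1 := by decide

private lemma m1pow_add (x y : ZMod 2) :
    ((-1 : ℝ)) ^ ((x + y).val) = (-1) ^ (x.val) * (-1) ^ (y.val) := by
  rcases zmod2_cases x with hx | hx <;> rcases zmod2_cases y with hy | hy <;>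
    subst hx <;> subst hy <;>
    norm_num [ZMod.val_one, ZMod.val_zero, show ((1:ZMod 2)+1) = 0 by decide, show ZMod.val (2 : ZMod 2) = 0 by decide]

private lemma m1pow_succ (x : ZMod 2) :
    ((-1 : ℝ)) ^ ((x + 1).val) = -((-1) ^ (x.val)) := by
  rcases zmod2_cases x with hx | hx <;> subst hx <;>
    norm_num [ZMod.val_one, ZMod.val_zero, show ((1:ZMod 2)+1) = 0 by decide, show ZMod.val (2 : ZMod 2) = 0 by decide]

private def mkLin {V : Type*} [AddCommGroup V] [Module (ZMod 2) V]
    (ℓ : V → ZMod 2) (hadd : ∀ a b, ℓ (a + b) = ℓ a + ℓ b) : V →ₗ[ZMod 2] ZMod 2 where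
  toFun := ℓ
  map_add' := hadd
  map_smul' := by
    intro c v
    have h0 : ℓ 0 = 0 := by
      have := hadd 0 0; simp only [add_zero] at this
      exact (left_eq_add.mp this)
    rcases zmod2_cases c with h | h <;> subst h <;> simp [h0]

private lemma mkLin_apply {V : Type*} [AddCommGroup V] [Module (ZMod 2) V]
    (ℓ : V → ZMod 2) (hadd : ∀ a b, ℓ (a + b) = ℓ a + ℓ b) (v : V) :
    mkLin ℓ hadd v = ℓ v := rfl

private lemma sum_zmod2 (F : ZMod 2 → ℝ) : (∑ x : ZMod 2, F x) = F 0 + F 1 := by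
  rw [show (Finset.univ : Finset (ZMod 2)) = {0, 1} by decide,
    Finset.sum_insert (by decide), Finset.sum_singleton]

private lemma arf_aux (g : ℕ) :
    ∀ {V : Type u} [AddCommGroup V] [Module (ZMod 2) V] [Fintype V]
      (ω : V → V → ZMod 2) (q : V → ZMod 2),
      Module.finrank (ZMod 2) V = 2 * g →
      (∀ a b c : V, ω (a + b) c = ω a c + ω b c) →
      (∀ a b c : V, ω a (b + c) = ω a b + ω a c) →
      (∀ a : V, ω a a = 0) →
      (∀ a : V, (∀ b : V, ω a b = 0) → a = 0) →
      (∀ a b : V, q (a + b) = q a + q b + ω a b) →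
      (∑ a : V, (-1 : ℝ) ^ ((q a).val)) = 2 ^ g →
      ∃ e : Fin g → V, LinearIndependent (ZMod 2) e ∧
        (∀ i j, ω (e i) (e j) = 0) ∧ (∀ i, q (e i) = 0) := by
  induction g with
  | zero =>
    intro V _ _ _ ω q hdim hbil₁ hbil₂ halt hnondeg hq hsum
    exact ⟨Fin.elim0, linearIndependent_empty_type, fun i => i.elim0, fun i => i.elim0⟩
  | succ g ih =>
    intro V _ _ _ ω q hdim hbil₁ hbil₂ halt hnondeg hq hsum
    letI := Classical.decEq V
    -- ZMod 2 helpers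
    have zhelp : ∀ x y : ZMod 2, x + y = 0 → x = y := by decide
    have zone : ∀ x : ZMod 2, x ≠ 0 → x = 1 := by decide
    have zq0 : ∀ x : ZMod 2, x = x + x → x = 0 := by decide
    have zself : ∀ x : ZMod 2, x + x = 0 := by decide
    -- basic ω lemmas
    have hω0r : ∀ a : V, ω a 0 = 0 := by
      intro a; have := hbil₂ a 0 0; simp only [add_zero] at this
      exact (left_eq_add.mp this)
    have hω0l : ∀ a : V, ω 0 a = 0 := by
      intro a; have := hbil₁ 0 0 a; simp only [add_zero] at this
      exact (left_eq_add.mp this)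
    have hsymm : ∀ a b : V, ω a b = ω b a := by
      intro a b
      have h := halt (a + b)
      rw [hbil₁, hbil₂, hbil₂, halt a, halt b] at h
      exact zhelp _ _ (by rw [← h]; ring)
    have hsmulr : ∀ (c : ZMod 2) (a b : V), ω a (c • b) = c * ω a b := by
      intro c a b; rcases zmod2_cases c with h | h <;> subst h <;>
        simp [hω0r]
    have hq0 : q 0 = 0 := by
      have := hq 0 0; rw [add_zero, hω0r, add_zero] at this
      exact zq0 _ this
    have haddself : ∀ x : V, x + x = 0 := by
      intro x
      have : ((2 : ZMod 2)) • x = x + x := two_smul _ x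
      rw [show ((2:ZMod 2)) = 0 by decide, zero_smul] at this
      exact this.symm
    -- find e₀ ≠ 0 with q e₀ = 0
    have hex : ∃ e₀ : V, e₀ ≠ 0 ∧ q e₀ = 0 := by
      by_contra hcon
      push_neg at hcon
      have hterm : ∀ v : V, v ≠ 0 → ((-1:ℝ)) ^ ((q v).val) = -1 := by
        intro v hv
        rw [zone _ (hcon v hv)]
        norm_num [ZMod.val_one]
      have h0 : ((-1:ℝ)) ^ ((q (0:V)).val) = 1 := by
        rw [hq0]; norm_num [ZMod.val_zero]
      have hsum2 : (∑ a : V, (-1 : ℝ) ^ ((q a).val))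
          = 1 + ∑ a ∈ Finset.univ.erase 0, (-1:ℝ) ^ ((q a).val) := by
        rw [← Finset.add_sum_erase _ _ (Finset.mem_univ (0:V)), h0]
      have herase : (∑ a ∈ Finset.univ.erase 0, (-1:ℝ) ^ ((q a).val))
          = -((Finset.univ.erase (0:V)).card : ℝ) := by
        rw [Finset.sum_congr rfl (fun a ha => hterm a (Finset.ne_of_mem_erase ha))]
        simp
      have hcard0 : (0:ℝ) ≤ ((Finset.univ.erase (0:V)).card : ℝ) := Nat.cast_nonneg _
      have hpow : (1:ℝ) ≤ 2 ^ g := one_le_pow₀ (by norm_num)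
      rw [hsum2, herase, pow_succ] at hsum
      linarith
    obtain ⟨e₀, he₀ne, hqe₀⟩ := hex
    have hexf : ∃ f : V, ω e₀ f ≠ 0 := by
      by_contra hcon; push_neg at hcon
      exact he₀ne (hnondeg _ hcon)
    obtain ⟨f, hf⟩ := hexf
    have hef : ω e₀ f = 1 := zone _ hf
    have hfe : ω f e₀ = 1 := by rw [← hsymm]; exact hef
    -- the linear map and kernel
    set φ : V →ₗ[ZMod 2] ZMod 2 × ZMod 2 :=
      (mkLin (ω e₀) (fun a b => hbil₂ e₀ a b)).prod (mkLin (ω f) (fun a b => hbil₂ f a b)) with hφ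
    have hφapp : ∀ v : V, φ v = (ω e₀ v, ω f v) := fun v => rfl
    have hsurj : Function.Surjective φ := by
      intro p
      refine ⟨p.2 • e₀ + p.1 • f, ?_⟩
      rw [hφapp]
      have h1 : ω e₀ (p.2 • e₀ + p.1 • f) = p.1 := by
        rw [hbil₂, hsmulr, hsmulr, halt, hef]; ring
      have h2 : ω f (p.2 • e₀ + p.1 • f) = p.2 := by
        rw [hbil₂, hsmulr, hsmulr, hfe, halt]; ring
      rw [h1, h2]
    set W : Submodule (ZMod 2) V := LinearMap.ker φ with hW
    have hWmem : ∀ v : V, v ∈ W ↔ (ω e₀ v = 0 ∧ ω f v = 0) := by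
      intro v
      rw [hW, LinearMap.mem_ker, hφapp, Prod.ext_iff]
      rfl
    letI : Fintype W := Fintype.ofFinite _
    -- dimension of W
    have hrk := LinearMap.finrank_range_add_finrank_ker φ
    rw [LinearMap.range_eq_top.2 hsurj, finrank_top] at hrk
    have hprod : finrank (ZMod 2) (ZMod 2 × ZMod 2) = 2 := by
      simp [finrank_prod]
    rw [hprod, hdim] at hrk
    have hWdim : finrank (ZMod 2) W = 2 * g := by rw [hW]; omega
    -- decomposition equiv
    have hmemw : ∀ v : V, v + ω f v • e₀ + ω e₀ v • f ∈ W := by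
      intro v
      rw [hWmem]
      constructor
      · rw [hbil₂, hbil₂, hsmulr, hsmulr, halt, hef]
        linear_combination zself (ω e₀ v)
      · rw [hbil₂, hbil₂, hsmulr, hsmulr, hfe, halt]
        linear_combination zself (ω f v)
    set E : (W × (ZMod 2 × ZMod 2)) ≃ V :=
      { toFun := fun p => ↑p.1 + p.2.1 • e₀ + p.2.2 • f
        invFun := fun v => (⟨v + ω f v • e₀ + ω e₀ v • f, hmemw v⟩, (ω f v, ω e₀ v))
        left_inv := by
          rintro ⟨⟨w, hw⟩, β, γ⟩
          rw [hWmem] at hw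
          have h1 : ω f (w + β • e₀ + γ • f) = β := by
            rw [hbil₂, hbil₂, hsmulr, hsmulr, hw.2, hfe, halt]; ring
          have h2 : ω e₀ (w + β • e₀ + γ • f) = γ := by
            rw [hbil₂, hbil₂, hsmulr, hsmulr, hw.1, halt, hef]; ring
          simp only [h1, h2, Prod.mk.injEq, Subtype.mk.injEq, and_true, true_and]
          have : w + β • e₀ + γ • f + β • e₀ + γ • f
              = w + (β • e₀ + β • e₀) + (γ • f + γ • f) := by abel
          rw [this, haddself, haddself, add_zero, add_zero]
        right_inv := by
          intro v
          show v + ω f v • e₀ + ω e₀ v • f + ω f v • e₀ + ω e₀ v • f = v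
          have : v + ω f v • e₀ + ω e₀ v • f + ω f v • e₀ + ω e₀ v • f
              = v + (ω f v • e₀ + ω f v • e₀) + (ω e₀ v • f + ω e₀ v • f) := by abel
          rw [this, haddself, haddself, add_zero, add_zero] }
    -- the sum splits
    have hqE : ∀ (w : W) (β γ : ZMod 2),
        q (↑w + β • e₀ + γ • f) = q ↑w + q (β • e₀ + γ • f) := by
      intro w β γ
      have hw := (hWmem _).1 w.2
      rw [add_assoc, hq]
      have h1 : ω ↑w (β • e₀ + γ • f) = 0 := by
        rw [hbil₂, hsmulr, hsmulr, hsymm (w:V) e₀, hsymm (w:V) f, hw.1, hw.2]; ring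
      rw [h1, add_zero]
    have hinner : (∑ x : ZMod 2 × ZMod 2, (-1:ℝ) ^ ((q (x.1 • e₀ + x.2 • f)).val)) = 2 := by
      rw [Fintype.sum_prod_type]
      rw [sum_zmod2 (fun x => ∑ y : ZMod 2, (-1:ℝ) ^ ((q (x • e₀ + y • f)).val))]
      rw [sum_zmod2, sum_zmod2]
      have ha : (0:ZMod 2) • e₀ + (0:ZMod 2) • f = 0 := by simp
      have hb : (0:ZMod 2) • e₀ + (1:ZMod 2) • f = f := by simp
      have hc : (1:ZMod 2) • e₀ + (0:ZMod 2) • f = e₀ := by simp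
      have hd : (1:ZMod 2) • e₀ + (1:ZMod 2) • f = e₀ + f := by simp
      rw [ha, hb, hc, hd, hq0, hqe₀]
      have hq3 : q (e₀ + f) = q f + 1 := by rw [hq, hqe₀, hef]; ring
      rw [hq3, m1pow_succ]
      rw [ZMod.val_zero]
      ring
    have hsplit : (∑ a : V, (-1 : ℝ) ^ ((q a).val))
        = (∑ w : W, (-1:ℝ) ^ ((q ↑w).val)) * 2 := by
      rw [← Equiv.sum_comp E (fun v => (-1:ℝ) ^ ((q v).val)), ← hinner,
        Fintype.sum_prod_type, Finset.sum_mul]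
      refine Finset.sum_congr rfl fun w _ => ?_
      rw [Finset.mul_sum]
      refine Finset.sum_congr rfl fun x _ => ?_
      show (-1:ℝ) ^ ((q (↑w + x.1 • e₀ + x.2 • f)).val) = _
      rw [hqE, m1pow_add]
    have hSW : (∑ w : W, (-1:ℝ) ^ ((q ↑w).val)) = 2 ^ g := by
      rw [hsplit, pow_succ] at hsum
      linarith
    -- apply induction hypothesis to W
    obtain ⟨e', hli', hω', hq'⟩ :=
      ih (V := W) (fun a b => ω ↑a ↑b) (fun a => q ↑a) hWdim
        (by intro a b c; simp [hbil₁])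
        (by intro a b c; simp [hbil₂])
        (by intro a; exact halt _)
        (by
          intro a ha
          have key : ∀ b : V, ω ↑a b = 0 := by
            intro b
            have hwmem := hmemw b
            have hb : b = (b + ω f b • e₀ + ω e₀ b • f) + ω f b • e₀ + ω e₀ b • f := by
              have : (b + ω f b • e₀ + ω e₀ b • f) + ω f b • e₀ + ω e₀ b • f
                  = b + (ω f b • e₀ + ω f b • e₀) + (ω e₀ b • f + ω e₀ b • f) := by abel
              rw [this, haddself, haddself, add_zero, add_zero]
            have ha' := (hWmem (a:V)).1 a.2
            have h1 : ω ↑a (b + ω f b • e₀ + ω e₀ b • f) = 0 := ha ⟨_, hwmem⟩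
            calc ω ↑a b = ω ↑a ((b + ω f b • e₀ + ω e₀ b • f) + ω f b • e₀ + ω e₀ b • f) := by
                  rw [← hb]
              _ = 0 := by
                  rw [hbil₂, hbil₂, h1, hsmulr, hsmulr, hsymm (a:V) e₀, hsymm (a:V) f,
                    ha'.1, ha'.2]
                  ring
          exact Subtype.ext (hnondeg _ key))
        (by intro a b; simp [hq])
        hSW
    -- assemble
    refine ⟨Fin.snoc (fun i => (↑(e' i) : V)) e₀, ?_, ?_, ?_⟩
    · rw [linearIndependent_fin_snoc]
      constructor
      · exact hli'.map' W.subtype (Submodule.ker_subtype W)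
      · intro hmem
        have hle : Submodule.span (ZMod 2) (Set.range fun i => (↑(e' i) : V)) ≤ W :=
          Submodule.span_le.2 (by rintro x ⟨i, rfl⟩; exact (e' i).2)
        have := ((hWmem e₀).1 (hle hmem)).2
        rw [hfe] at this
        exact one_ne_zero this
    · intro i j
      rcases Fin.eq_castSucc_or_eq_last i with ⟨i', rfl⟩ | rfl <;>
        rcases Fin.eq_castSucc_or_eq_last j with ⟨j', rfl⟩ | rfl <;>
        simp only [Fin.snoc_castSucc, Fin.snoc_last]
      · exact hω' i' j'
      · rw [hsymm]; exact ((hWmem _).1 (e' i').2).1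
      · exact ((hWmem _).1 (e' j').2).1
      · exact halt e₀
    · intro i
      rcases Fin.eq_castSucc_or_eq_last i with ⟨i', rfl⟩ | rfl <;>
        simp only [Fin.snoc_castSucc, Fin.snoc_last]
      · exact hq' i'
      · exact hqe₀

/-- If the Arf invariant of a quadratic form on a `2g`-dimensional symplectic
`ℤ/2`-vector space equals `1`, then there exist `g` linearly independent
isotropic vectors on which the quadratic form vanishes. -/
theorem exists_isotropic_family_of_arf_eq_one {V : Type*}
    [AddCommGroup V] [Module (ZMod 2) V] [Fintype V]
    (g : ℕ) (hdim : Module.finrank (ZMod 2) V = 2 * g)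
    (ω : V → V → ZMod 2)
    (hbil₁ : ∀ a b c : V, ω (a + b) c = ω a c + ω b c)
    (hbil₂ : ∀ a b c : V, ω a (b + c) = ω a b + ω a c)
    (halt : ∀ a : V, ω a a = 0)
    (hnondeg : ∀ a : V, (∀ b : V, ω a b = 0) → a = 0)
    (q : V → ZMod 2)
    (hq : ∀ a b : V, q (a + b) = q a + q b + ω a b)
    (harf : (2 : ℝ) ^ (-(g : ℤ)) * ∑ a : V, (-1 : ℝ) ^ ((q a).val) = 1) :
    ∃ e : Fin g → V,
      LinearIndependent (ZMod 2) e ∧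
      (∀ i j : Fin g, ω (e i) (e j) = 0) ∧
      (∀ i : Fin g, q (e i) = 0) := by
  have hS : (∑ a : V, (-1 : ℝ) ^ ((q a).val)) = 2 ^ g := by
    have hmul := congrArg (fun x => (2:ℝ) ^ ((g:ℤ)) * x) harf
    simp only [mul_one] at hmul
    rw [← mul_assoc, ← zpow_add₀ (two_ne_zero), add_neg_cancel, zpow_zero, one_mul,
      zpow_natCast] at hmul
    exact hmul
  exact arf_aux g ω q hdim hbil₁ hbil₂ halt hnondeg hq hS
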